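/- arXiv:2204.01052 — 2 statements merged into one kernel-verified Lean document; each statement's English description precedes it below -/
import Mathlib

section
/- Let Q ∈ ℂ^{n×n} be Hermitian positive definite, x ∈ ℂ^n, α = xᴴQx (a nonnegative real), and t = Qx/√(1+α). Then Tr[Q²] − Tr[((Q⁻¹ + xxᴴ)⁻¹)²] = 2 tᴴQt − ‖t‖⁴, where tᴴQt is a nonnegative real number. -/
open Matrix
open scoped ComplexOrder

/-! By the Sherman–Morrison formula, `(Q⁻¹ + xxᴴ)⁻¹ = Q - (1 + α)⁻¹ (Qx)(Qx)ᴴ = Q - ttᴴ`.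
For any square `A`, expanding `Tr[(A - abᵀ)²]` leaves `Tr[A²] - 2 bᵀAa + (bᵀa)²`;
with `A = Q`, `a = t`, `b = t̄` this is the claim, since `tᴴt = ‖t‖²`. -/

/-- squared Euclidean norm of a complex vector -/
noncomputable def nsq {n : ℕ} (v : Fin n → ℂ) : ℝ := ∑ i, Complex.normSq (v i)

namespace Matrix

variable {ι : Type*} [Fintype ι]

theorem inv_add_vecMulVec {K : Type*} [Field K] [DecidableEq ι] (A : Matrix ι ι K)
    (hA : IsUnit A.det) (u v : ι → K) (h : 1 + v ⬝ᵥ A *ᵥ u ≠ 0) :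
    (A⁻¹ + vecMulVec u v)⁻¹ = A - (1 + v ⬝ᵥ A *ᵥ u)⁻¹ • vecMulVec (A *ᵥ u) (v ᵥ* A) := by
  set c := 1 + v ⬝ᵥ A *ᵥ u
  apply inv_eq_left_inv
  have hcoeff : 1 - c⁻¹ - c⁻¹ * (v ⬝ᵥ A *ᵥ u) = 0 := by
    field_simp
    ring
  calc (A - c⁻¹ • vecMulVec (A *ᵥ u) (v ᵥ* A)) * (A⁻¹ + vecMulVec u v)
      = 1 + (1 - c⁻¹ - c⁻¹ * (v ⬝ᵥ A *ᵥ u)) • vecMulVec (A *ᵥ u) v := by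
        rw [Matrix.sub_mul, Matrix.mul_add, Matrix.mul_add, Matrix.smul_mul, Matrix.smul_mul,
          mul_nonsing_inv A hA, mul_vecMulVec A, vecMulVec_mul, vecMul_vecMul,
          mul_nonsing_inv A hA, vecMul_one, vecMulVec_mul_vecMulVec, ← dotProduct_mulVec,
          vecMulVec_smul]
        module
    _ = 1 := by rw [hcoeff, zero_smul, add_zero]

theorem trace_mul_self_sub_trace_sub_vecMulVec_sq {R : Type*} [CommRing R]
    (A : Matrix ι ι R) (a b : ι → R) :
    trace (A * A) - trace ((A - vecMulVec a b) * (A - vecMulVec a b))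
      = 2 * (b ⬝ᵥ A *ᵥ a) - (b ⬝ᵥ a) ^ 2 := by
  rw [Matrix.sub_mul, Matrix.mul_sub, Matrix.mul_sub, trace_sub, trace_sub, trace_sub,
    mul_vecMulVec, vecMulVec_mul, vecMulVec_mul_vecMulVec, trace_vecMulVec, trace_vecMulVec,
    trace_vecMulVec, dotProduct_smul, smul_eq_mul, dotProduct_comm (A *ᵥ a),
    dotProduct_comm a (b ᵥ* A), ← dotProduct_mulVec, dotProduct_comm a b]
  ring

end Matrix

theorem ofReal_nsq {n : ℕ} (v : Fin n → ℂ) : (nsq v : ℂ) = star v ⬝ᵥ v := by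
  simp [nsq, dotProduct, Complex.normSq_eq_conj_mul_self]

theorem trace_sq_reduction_rank_one_general
    (n : ℕ) (Q : Matrix (Fin n) (Fin n) ℂ) (hQ : Q.PosDef) (x : Fin n → ℂ)
    (α : ℝ) (hα : (α : ℂ) = star x ⬝ᵥ Q *ᵥ x)
    (t : Fin n → ℂ) (ht : t = ((Real.sqrt (1 + α) : ℝ) : ℂ)⁻¹ • (Q *ᵥ x)) :
    ((star t ⬝ᵥ Q *ᵥ t).im = 0 ∧ 0 ≤ (star t ⬝ᵥ Q *ᵥ t).re) ∧
    Matrix.trace (Q * Q)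
        - Matrix.trace
            ((Q⁻¹ + vecMulVec x (star x))⁻¹ * (Q⁻¹ + vecMulVec x (star x))⁻¹)
      = 2 * (star t ⬝ᵥ Q *ᵥ t) - ((nsq t : ℝ) : ℂ) ^ 2 := by
  have hα0 : 0 ≤ α := by
    simpa [← hα] using hQ.posSemidef.dotProduct_mulVec_nonneg x
  have hsqrt : (Real.sqrt (1 + α) : ℂ)⁻¹ * (Real.sqrt (1 + α) : ℂ)⁻¹ = (1 + (α : ℂ))⁻¹ := by
    rw [← mul_inv, ← Complex.ofReal_mul, Real.mul_self_sqrt (by linarith)]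
    push_cast
    rfl
  have hne : 1 + star x ⬝ᵥ Q *ᵥ x ≠ 0 := by
    rw [← hα]
    exact_mod_cast (by linarith : 1 + α ≠ 0)
  have hstar : star x ᵥ* Q = star (Q *ᵥ x) := by
    rw [star_mulVec, hQ.isHermitian.eq]
  have hinv : (Q⁻¹ + vecMulVec x (star x))⁻¹ = Q - vecMulVec t (star t) := by
    rw [inv_add_vecMulVec Q (isUnit_iff_ne_zero.mpr hQ.det_pos.ne') x (star x) hne, ← hα,
      hstar, ht, star_smul, star_inv₀,
      Complex.star_def, Complex.conj_ofReal, vecMulVec_smul, smul_vecMulVec, smul_smul, hsqrt]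
  refine ⟨?_, ?_⟩
  · obtain ⟨hre, him⟩ := Complex.nonneg_iff.mp (hQ.posSemidef.dotProduct_mulVec_nonneg t)
    exact ⟨him.symm, hre⟩
  · rw [hinv, trace_mul_self_sub_trace_sub_vecMulVec_sq, ofReal_nsq]

/-- for Hermitian positive definite `Q`, `x ∈ ℂⁿ`, `α = xᴴQx`
(a nonnegative real) and `t = Qx/√(1+α)`,
`Tr[Q²] − Tr[((Q⁻¹ + xxᴴ)⁻¹)²] = 2 tᴴQt − ‖t‖⁴`, where `tᴴQt` is a
nonnegative real number. -/
theorem trace_sq_reduction_rank_one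
    (n : ℕ) (Q : Matrix (Fin n) (Fin n) ℂ) (hQ : Q.PosDef) (x : Fin n → ℂ)
    (α : ℝ) (hα : (α : ℂ) = star x ⬝ᵥ Q *ᵥ x) (hα0 : 0 ≤ α)
    (t : Fin n → ℂ) (ht : t = ((Real.sqrt (1 + α) : ℝ) : ℂ)⁻¹ • (Q *ᵥ x)) :
    ((star t ⬝ᵥ Q *ᵥ t).im = 0 ∧ 0 ≤ (star t ⬝ᵥ Q *ᵥ t).re) ∧
    Matrix.trace (Q * Q)
        - Matrix.trace
            ((Q⁻¹ + vecMulVec x (star x))⁻¹ * (Q⁻¹ + vecMulVec x (star x))⁻¹)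
      = 2 * (star t ⬝ᵥ Q *ᵥ t) - ((nsq t : ℝ) : ℂ) ^ 2 :=
  trace_sq_reduction_rank_one_general n Q hQ x α hα t ht
end

section
/- In the Δ-setup, the reduction in the trace of the error covariance expression achieved by adding the symbol x̂ as an extra pilot equals Tr[σ²Q − σ⁴Q² + Q D Dᴴ Q] − Tr[σ²Q₁ − σ⁴Q₁² + Q₁ D₁ D₁ᴴ Q₁] = ‖t‖²( σ² + σ⁴(‖t‖² − 2β) + ‖v‖² − ‖e − u + v‖² ). (This is the closed-form reward Δ_n(a) in Theorem 1 of the paper.) -/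
open Matrix
open scoped ComplexOrder

theorem smul_inv_smul_of_eq_zero_imp {K V : Type*} [DivisionRing K] [AddCommGroup V] [Module K V]
    {k : K} {y : V} (h : k = 0 → y = 0) : k • k⁻¹ • y = y := by
  rcases eq_or_ne k 0 with hk | hk
  · rw [hk, zero_smul, h hk]
  · exact smul_inv_smul₀ hk y

theorem nsq_eq_dotProduct {N : ℕ} (x : Fin N → ℂ) : ((nsq x : ℝ) : ℂ) = star x ⬝ᵥ x := by
  push_cast [nsq, dotProduct]
  exact Finset.sum_congr rfl fun i _ => Complex.normSq_eq_conj_mul_self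

namespace Matrix

variable {m n R : Type*} [Fintype n] [CommRing R] [StarRing R]

theorem trace_sub_vecMulVec_star (Q : Matrix n n R) (t : n → R) :
    trace (Q - vecMulVec t (star t)) = trace Q - star t ⬝ᵥ t := by
  rw [trace_sub, trace_vecMulVec, dotProduct_comm]

theorem trace_sub_vecMulVec_star_mul_self (Q : Matrix n n R) (t : n → R) :
    trace ((Q - vecMulVec t (star t)) * (Q - vecMulVec t (star t)))
      = trace (Q * Q) - 2 * (star t ⬝ᵥ Q *ᵥ t) + (star t ⬝ᵥ t) ^ 2 := by
  have hQt : trace (Q * vecMulVec t (star t)) = star t ⬝ᵥ Q *ᵥ t := by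
    rw [mul_vecMulVec, trace_vecMulVec, dotProduct_comm]
  simp only [sub_mul, mul_sub, trace_sub, trace_mul_comm (vecMulVec t (star t)) Q, hQt,
    vecMulVec_mul_vecMulVec, trace_vecMulVec, dotProduct_smul, smul_eq_mul,
    dotProduct_comm t (star t)]
  ring

theorem trace_add_vecMulVec_mul_conjTranspose [Fintype m] (M : Matrix m n R) (a : m → R)
    (b : n → R) :
    trace ((M + vecMulVec a (star b)) * (M + vecMulVec a (star b))ᴴ)
      = trace (M * Mᴴ) + star (Mᴴ *ᵥ a) ⬝ᵥ b + star b ⬝ᵥ Mᴴ *ᵥ a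
        + (star a ⬝ᵥ a) * (star b ⬝ᵥ b) := by
  have cross₁ : trace (M * vecMulVec b (star a)) = star (Mᴴ *ᵥ a) ⬝ᵥ b := by
    rw [mul_vecMulVec, trace_vecMulVec, star_mulVec, conjTranspose_conjTranspose,
      dotProduct_comm, dotProduct_mulVec]
  have cross₂ : trace (vecMulVec a (star b) * Mᴴ) = star b ⬝ᵥ Mᴴ *ᵥ a := by
    rw [vecMulVec_mul, trace_vecMulVec, dotProduct_comm, dotProduct_mulVec]
  have square : trace (vecMulVec a (star b) * vecMulVec b (star a))
      = (star a ⬝ᵥ a) * (star b ⬝ᵥ b) := by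
    rw [vecMulVec_mul_vecMulVec, trace_vecMulVec, dotProduct_smul, smul_eq_mul,
      dotProduct_comm a, mul_comm]
  rw [conjTranspose_add, conjTranspose_vecMulVec, star_star, Matrix.add_mul, Matrix.mul_add,
    Matrix.mul_add, trace_add, trace_add, trace_add, cross₁, cross₂, square]
  ring

theorem trace_add_vecMulVec_mul_conjTranspose_of_conjTranspose_mulVec [Fintype m]
    (M : Matrix m n R) {a : m → R} (b : n → R) {v : n → R}
    (hv : Mᴴ *ᵥ a = (star a ⬝ᵥ a) • v) :
    trace ((M + vecMulVec a (star b)) * (M + vecMulVec a (star b))ᴴ)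
      = trace (M * Mᴴ) + (star a ⬝ᵥ a) * (star (b + v) ⬝ᵥ (b + v) - star v ⬝ᵥ v) := by
  have hself : star (star a ⬝ᵥ a) = star a ⬝ᵥ a := by rw [← star_dotProduct_star, star_star]
  rw [trace_add_vecMulVec_mul_conjTranspose, hv, star_smul, hself]
  simp only [star_add, add_dotProduct, dotProduct_add, smul_dotProduct, dotProduct_smul,
    smul_eq_mul]
  ring

theorem sub_vecMulVec_star_mul_add_vecMulVec {Q : Matrix n n R} {t x : n → R} {c : R}
    (h : (Q - vecMulVec t (star t)) *ᵥ x = c • t) (D : Matrix n m R) (y : m → R) :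
    (Q - vecMulVec t (star t)) * (D + vecMulVec x (star y))
      = Q * D + vecMulVec t (star (star c • y - Dᴴ *ᵥ t)) := by
  have hDt : star t ᵥ* D = star (Dᴴ *ᵥ t) := by
    rw [star_mulVec, conjTranspose_conjTranspose]
  rw [Matrix.mul_add, mul_vecMulVec, h, Matrix.sub_mul, vecMulVec_mul, hDt, star_sub, star_smul,
    star_star, vecMulVec_sub, smul_vecMulVec, vecMulVec_smul]
  abel

theorem IsHermitian.mul_mul_conjTranspose_mul [Fintype m] {Q : Matrix n n R}
    (hQ : Q.IsHermitian) (D : Matrix n m R) : Q * D * Dᴴ * Q = Q * D * (Q * D)ᴴ := by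
  rw [conjTranspose_mul, hQ.eq, Matrix.mul_assoc (Q * D)]

theorem posSemidef_inv_mul_conjTranspose_add_smul_one {m 𝕜 : Type*} [Fintype m] [DecidableEq n]
    [RCLike 𝕜] (A : Matrix n m 𝕜) {r : 𝕜} (hr : 0 ≤ r) : (A * Aᴴ + r • 1)⁻¹.PosSemidef :=
  ((posSemidef_self_mul_conjTranspose A).add (PosSemidef.one.smul hr)).inv

theorem sub_vecMulVec_star_mulVec_self {Q : Matrix n n ℂ} (hQ : Q.PosSemidef)
    {x t : n → ℂ} {α : ℝ} (hα : (α : ℂ) = star x ⬝ᵥ Q *ᵥ x)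
    (ht : t = ((√(1 + α) : ℝ) : ℂ)⁻¹ • (Q *ᵥ x)) :
    (Q - vecMulVec t (star t)) *ᵥ x = ((√(1 + α) : ℝ) : ℂ)⁻¹ • t := by
  have hα0 : 0 ≤ α := by exact_mod_cast hα ▸ hQ.dotProduct_mulVec_nonneg x
  set s : ℝ := √(1 + α) with hs
  have hs0 : (s : ℂ) ≠ 0 := by
    rw [Complex.ofReal_ne_zero, hs]; positivity
  have hss : (s : ℂ) * s = 1 + α := by
    rw [← Complex.ofReal_mul, hs, Real.mul_self_sqrt (by positivity)]; push_cast; rfl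
  have hQx : Q *ᵥ x = (s : ℂ) • t := by rw [ht, smul_inv_smul₀ hs0]
  have htx : star t ⬝ᵥ x = α / s := by
    rw [ht, star_smul, star_mulVec, hQ.isHermitian.eq, smul_dotProduct, ← dotProduct_mulVec, ← hα,
      star_inv₀, Complex.star_def, Complex.conj_ofReal, smul_eq_mul, div_eq_inv_mul]
  rw [sub_mulVec, vecMulVec_mulVec, op_smul_eq_smul, hQx, htx, ← sub_smul]
  congr 1
  field_simp
  linear_combination hss

end Matrix

theorem delta_closed_form_general
    (N L : ℕ) (σ : ℝ)
    (Xhat : Matrix (Fin N) (Fin L) ℂ)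
    (xh xt : Fin N → ℂ)
    (Q D Q₁ D₁ : Matrix (Fin N) (Fin N) ℂ)
    (hQ : Q = (Xhat * Xhatᴴ + ((σ : ℂ) ^ 2) • 1)⁻¹)
    (α : ℝ) (hα : (α : ℂ) = star xh ⬝ᵥ Q *ᵥ xh)
    (t : Fin N → ℂ) (ht : t = ((Real.sqrt (1 + α) : ℝ) : ℂ)⁻¹ • (Q *ᵥ xh))
    (hQ₁ : Q₁ = Q - vecMulVec t (star t))
    (hD₁ : D₁ = D + vecMulVec xh (star (xh - xt)))
    (e u v : Fin N → ℂ)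
    (he : e = ((Real.sqrt (1 + α) : ℝ) : ℂ)⁻¹ • (xh - xt))
    (hu : u = Dᴴ *ᵥ t)
    (hv : v = ((nsq t : ℝ) : ℂ)⁻¹ • (Dᴴ *ᵥ (Q *ᵥ t)))
    (β : ℝ) (hβ : (β : ℂ) = ((nsq t : ℝ) : ℂ)⁻¹ * (star t ⬝ᵥ Q *ᵥ t)) :
    Matrix.trace (((σ : ℂ) ^ 2) • Q - ((σ : ℂ) ^ 4) • (Q * Q) + Q * D * Dᴴ * Q)
        - Matrix.trace
            (((σ : ℂ) ^ 2) • Q₁ - ((σ : ℂ) ^ 4) • (Q₁ * Q₁) + Q₁ * D₁ * D₁ᴴ * Q₁)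
      = ((nsq t * (σ ^ 2 + σ ^ 4 * (nsq t - 2 * β) + nsq v - nsq (e - u + v)) : ℝ) : ℂ) := by
  have hQpsd : Q.PosSemidef :=
    hQ ▸ posSemidef_inv_mul_conjTranspose_add_smul_one Xhat (by exact_mod_cast sq_nonneg σ)
  have hQ₁D₁ : Q₁ * D₁ = Q * D + vecMulVec t (star (e - u)) := by
    rw [hQ₁, hD₁,
      sub_vecMulVec_star_mul_add_vecMulVec (sub_vecMulVec_star_mulVec_self hQpsd hα ht), he, hu]
    simp
  -- `v` and `β` carry the factor `(nsq t)⁻¹`, which is `0` when `t = 0`; both sides vanish then.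
  have hQDt : (Q * D)ᴴ *ᵥ t = (star t ⬝ᵥ t) • v := by
    rw [hv, nsq_eq_dotProduct, smul_inv_smul_of_eq_zero_imp, conjTranspose_mul,
      hQpsd.isHermitian.eq, mulVec_mulVec]
    intro h
    simp [dotProduct_star_self_eq_zero.1 h]
  have htQt : star t ⬝ᵥ Q *ᵥ t = (star t ⬝ᵥ t) * β := by
    rw [hβ, nsq_eq_dotProduct, ← smul_eq_mul, ← smul_eq_mul, smul_inv_smul_of_eq_zero_imp]
    intro h
    simp [dotProduct_star_self_eq_zero.1 h]
  have hQ₁herm : Q₁.IsHermitian :=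
    hQ₁ ▸ hQpsd.isHermitian.sub (posSemidef_vecMulVec_self_star t).isHermitian
  rw [hQpsd.isHermitian.mul_mul_conjTranspose_mul, hQ₁herm.mul_mul_conjTranspose_mul, hQ₁D₁]
  simp only [trace_add, trace_sub, trace_smul, smul_eq_mul,
    trace_add_vecMulVec_mul_conjTranspose_of_conjTranspose_mulVec _ _ hQDt]
  rw [hQ₁, trace_sub_vecMulVec_star, trace_sub_vecMulVec_star_mul_self, htQt]
  push_cast [nsq_eq_dotProduct]
  ring

/-- in the Δ-setup, the reduction in the trace of the error
covariance expression achieved by adding the symbol `x̂` as an extra pilot: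
`Tr[σ²Q − σ⁴Q² + Q D Dᴴ Q] − Tr[σ²Q₁ − σ⁴Q₁² + Q₁ D₁ D₁ᴴ Q₁]
  = ‖t‖²(σ² + σ⁴(‖t‖² − 2β) + ‖v‖² − ‖e − u + v‖²)`
(the closed-form reward `Δ_n(a)` of Theorem 1). -/
theorem delta_closed_form
    (N L : ℕ) (σ : ℝ) (hσ : 0 < σ)
    (Xhat X : Matrix (Fin N) (Fin L) ℂ)
    (xh xt : Fin N → ℂ) (hxh : xh ≠ 0)
    (Q D Q₁ D₁ : Matrix (Fin N) (Fin N) ℂ)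
    (hQ : Q = (Xhat * Xhatᴴ + ((σ : ℂ) ^ 2) • 1)⁻¹)
    (hD : D = Xhat * (Xhat - X)ᴴ + ((σ : ℂ) ^ 2) • 1)
    (α : ℝ) (hα : (α : ℂ) = star xh ⬝ᵥ Q *ᵥ xh)
    (t : Fin N → ℂ) (ht : t = ((Real.sqrt (1 + α) : ℝ) : ℂ)⁻¹ • (Q *ᵥ xh))
    (hQ₁ : Q₁ = Q - vecMulVec t (star t))
    (hD₁ : D₁ = D + vecMulVec xh (star (xh - xt)))
    (e u v : Fin N → ℂ)
    (he : e = ((Real.sqrt (1 + α) : ℝ) : ℂ)⁻¹ • (xh - xt))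
    (hu : u = Dᴴ *ᵥ t)
    (hv : v = ((nsq t : ℝ) : ℂ)⁻¹ • (Dᴴ *ᵥ (Q *ᵥ t)))
    (β : ℝ) (hβ : (β : ℂ) = ((nsq t : ℝ) : ℂ)⁻¹ * (star t ⬝ᵥ Q *ᵥ t)) :
    Matrix.trace (((σ : ℂ) ^ 2) • Q - ((σ : ℂ) ^ 4) • (Q * Q) + Q * D * Dᴴ * Q)
        - Matrix.trace
            (((σ : ℂ) ^ 2) • Q₁ - ((σ : ℂ) ^ 4) • (Q₁ * Q₁) + Q₁ * D₁ * D₁ᴴ * Q₁)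
      = ((nsq t * (σ ^ 2 + σ ^ 4 * (nsq t - 2 * β) + nsq v - nsq (e - u + v)) : ℝ) : ℂ) :=
  delta_closed_form_general N L σ Xhat xh xt Q D Q₁ D₁ hQ α hα t ht hQ₁ hD₁ e u v he hu hv β hβ
end
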